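/- arXiv:2505.14046 — 7 statements merged into one kernel-verified Lean document; each statement's English description precedes it below -/
import Mathlib

section
/- Let G be a temporal graph with n ≥ 2 vertices, lifetime T, and connected underlying graph, such that every edge has frequency at most f, and suppose T ≥ f(2n−3). Then from any starting vertex v there exists a temporal walk exploring G (visiting every vertex) whose final timestep is at most f(2n−3). -/
/-- A temporal graph on vertex type `V`: timesteps `1, …, T`, with `active t e`
meaning the undirected edge `e` is active at timestep `t`. -/
structure TemporalGraph (V : Type) where
  T : ℕ
  active : ℕ → Sym2 V → Prop

namespace TemporalGraph

variable {V : Type}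

/-- Edge `e` has frequency at most `f`: it is active at least once in every
window of `f` consecutive timesteps within `[1, T]`. -/
def FreqLE (G : TemporalGraph V) (e : Sym2 V) (f : ℕ) : Prop :=
  0 < f ∧ ∀ t, 1 ≤ t → t + f ≤ G.T + 1 → ∃ s ∈ Finset.Ico t (t + f), G.active s e

/-- The frequency of an edge: the least `f` such that `e` is active at least
once in every `f` consecutive timesteps. -/
noncomputable def freq (G : TemporalGraph V) (e : Sym2 V) : ℕ :=
  sInf {f | G.FreqLE e f}

/-- Edge `e` is `r`-regular. -/
def Regular (G : TemporalGraph V) (e : Sym2 V) (r : ℕ) : Prop :=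
  0 < r ∧ ∀ t, r + 1 ≤ t → t + r ≤ G.T →
    ((G.active (t - r) e ↔ G.active t e) ∧ (G.active t e ↔ G.active (t + r) e))

/-- The underlying (static) graph of a temporal graph. -/
def underlying (G : TemporalGraph V) : SimpleGraph V where
  Adj u v := u ≠ v ∧ ∃ t ∈ Finset.Icc 1 G.T, G.active t s(u, v)
  symm := by
    constructor
    intro u v h
    refine ⟨h.1.symm, ?_⟩
    rw [Sym2.eq_swap]
    exact h.2
  loopless := ⟨fun v h => h.1 rfl⟩

/-- A temporal walk starting at `start`, given by vertices `vs 0, …, vs m` and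
strictly increasing timesteps `ts 0 < … < ts (m-1)`, each step using an edge
active at its timestep. -/
structure TWalk (G : TemporalGraph V) (start : V) where
  m : ℕ
  vs : Fin (m + 1) → V
  ts : Fin m → ℕ
  start_eq : vs 0 = start
  mono : StrictMono ts
  time_ge : ∀ i, 1 ≤ ts i
  time_le : ∀ i, ts i ≤ G.T
  steps : ∀ i : Fin m, G.active (ts i) s(vs i.castSucc, vs i.succ)

/-- A temporal walk explores the graph if every vertex is visited. -/
def TWalk.Explores {G : TemporalGraph V} {start : V} (w : G.TWalk start) : Prop :=
  Function.Surjective w.vs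

/-- The length of a temporal walk: its final timestep. -/
def TWalk.length {G : TemporalGraph V} {start : V} (w : G.TWalk start) : ℕ :=
  Finset.univ.sup w.ts

end TemporalGraph

/-!
A connected graph on `n` vertices has, from every vertex, a closed walk through all vertices of
length at most `2(n - 1)`: remove a vertex `u` whose deletion keeps the graph connected, cover the
rest, splice in the detour `x → u → x` at a neighbour `x` of `u`, and rotate the loop to the start.
Its last edge only returns to the start, so dropping it leaves a covering walk of length at most
`2n - 3`. The frequency bound lets the `i`-th edge of that walk be taken at some time in
`(f i, f (i + 1)]`, so the walk is over by time `f (2n - 3)`.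
-/

namespace SimpleGraph

variable {V : Type*} {G : SimpleGraph V}

theorem Connected.exists_closed_walk_forall_mem_support [Fintype V] (hG : G.Connected) (v : V) :
    ∃ p : G.Walk v v, (∀ x, x ∈ p.support) ∧ p.length ≤ 2 * (Fintype.card V - 1) := by
  classical
  obtain ⟨n, hn⟩ : ∃ n, Fintype.card V = n := ⟨_, rfl⟩
  induction n generalizing V with
  | zero => exact absurd hn (@Fintype.card_ne_zero V _ ⟨v⟩)
  | succ n ih =>
    rcases subsingleton_or_nontrivial V with hV | hV
    · exact ⟨.nil, fun x => by simp [Subsingleton.elim x v], by simp⟩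
    obtain ⟨u, hu⟩ := hG.exists_connected_induce_compl_singleton_of_finite_nontrivial
    obtain ⟨x, hux⟩ := hG.preconnected.exists_adj_of_nontrivial u
    have hcard : Fintype.card ({u}ᶜ : Set V) = n := by
      rw [Fintype.card_compl_set]
      simp [hn]
    obtain ⟨q, hq, hlen⟩ := ih hu ⟨x, Set.mem_compl_singleton_iff.2 hux.ne.symm⟩ hcard
    let q' := q.map (Embedding.induce ({u}ᶜ : Set V)).toHom
    have hq' : ∀ y ≠ u, y ∈ q'.support := fun y hy => by
      rw [Walk.support_map]
      exact List.mem_map_of_mem (hq ⟨y, Set.mem_compl_singleton_iff.2 hy⟩)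
    let c : G.Walk x x := .cons hux.symm (.cons hux q')
    have hc : ∀ y, y ∈ c.support := fun y => by
      by_cases hy : y = u
      · simp [c, hy]
      · exact List.mem_cons_of_mem _ (List.mem_cons_of_mem _ (hq' y hy))
    have hc_len : c.length = q.length + 2 := congrArg (· + 1 + 1) (Walk.length_map _ q)
    refine ⟨c.rotate v (hc v), fun y => (Walk.mem_support_rotate_iff ..).2 (hc y), ?_⟩
    have : 2 ≤ Fintype.card V := Fintype.one_lt_card
    rw [Walk.length_rotate, hc_len]
    omega

theorem Walk.mem_support_dropLast_of_mem_support {u x : V} {p : G.Walk u u}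
    (hx : x ∈ p.support) : x ∈ p.dropLast.support := by
  by_cases hp : p.Nil
  · rw [hp.eq_nil] at hx ⊢
    exact hx
  · rw [← support_dropLast_concat hp, List.mem_append, List.mem_singleton] at hx
    rcases hx with hx | rfl
    · exact hx
    · exact p.dropLast.start_mem_support

end SimpleGraph

namespace TemporalGraph

variable {V : Type} {G : TemporalGraph V} {f : ℕ}

theorem FreqLE.exists_active_Ioc {e : Sym2 V} (h : G.FreqLE e f) {a : ℕ} (ha : a + f ≤ G.T) :
    ∃ t ∈ Finset.Ioc a (a + f), G.active t e := by
  obtain ⟨t, ht, hact⟩ := h.2 (a + 1) (by omega) (by omega)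
  rw [Finset.mem_Ico] at ht
  exact ⟨t, Finset.mem_Ioc.2 ⟨by omega, by omega⟩, hact⟩

theorem exists_tWalk_of_walk (hf : ∀ u v, G.underlying.Adj u v → G.FreqLE s(u, v) f)
    {v w : V} (p : G.underlying.Walk v w) (hT : f * p.length ≤ G.T) :
    ∃ tw : G.TWalk v, (∀ x ∈ p.support, x ∈ Set.range tw.vs) ∧ tw.length ≤ f * p.length := by
  have window : ∀ i : Fin p.length, ∃ t ∈ Finset.Ioc (f * i) (f * i + f),
      G.active t s(p.getVert i, p.getVert (i + 1)) := fun i =>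
    (hf _ _ (p.adj_getVert_succ i.isLt)).exists_active_Ioc <|
      calc f * i + f = f * (i + 1) := by ring
        _ ≤ f * p.length := Nat.mul_le_mul_left f i.isLt
        _ ≤ G.T := hT
  choose ts hts hact using window
  have lt_ts : ∀ i, f * i < ts i := fun i => (Finset.mem_Ioc.1 (hts i)).1
  have ts_le : ∀ i : Fin p.length, ts i ≤ f * (i + 1) := fun i =>
    (Finset.mem_Ioc.1 (hts i)).2.trans_eq (by ring)
  have ts_le_length : ∀ i : Fin p.length, ts i ≤ f * p.length := fun i =>
    (ts_le i).trans (Nat.mul_le_mul_left f i.isLt)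
  refine ⟨{ m := p.length
            vs := fun i => p.getVert i
            ts := ts
            start_eq := p.getVert_zero
            mono := fun i j hij => ?_
            time_ge := fun i => Nat.one_le_of_lt (lt_ts i)
            time_le := fun i => (ts_le_length i).trans hT
            steps := hact }, ?_, Finset.sup_le fun i _ => ts_le_length i⟩
  · calc ts i ≤ f * (i + 1) := ts_le i
      _ ≤ f * j := Nat.mul_le_mul_left f (Fin.lt_def.1 hij)
      _ < ts j := lt_ts j
  · intro x hx
    obtain ⟨k, rfl, hk⟩ := SimpleGraph.Walk.mem_support_iff_exists_getVert.1 hx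
    exact ⟨⟨k, Nat.lt_succ_of_le hk⟩, rfl⟩

end TemporalGraph

theorem explore_frequent_general {V : Type} [Fintype V] (G : TemporalGraph V) (f n : ℕ)
    (hn : n = Fintype.card V)
    (hconn : G.underlying.Connected)
    (hf : ∀ u v : V, G.underlying.Adj u v → G.FreqLE s(u, v) f)
    (hT : f * (2 * n - 3) ≤ G.T) (v : V) :
    ∃ w : G.TWalk v, w.Explores ∧ w.length ≤ f * (2 * n - 3) := by
  obtain ⟨p, hcover, hlen⟩ := hconn.exists_closed_walk_forall_mem_support v
  have hlen' : f * p.dropLast.length ≤ f * (2 * n - 3) := by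
    apply Nat.mul_le_mul_left
    rw [SimpleGraph.Walk.length_dropLast]
    omega
  obtain ⟨w, hw, hwlen⟩ := TemporalGraph.exists_tWalk_of_walk hf p.dropLast (hlen'.trans hT)
  exact ⟨w, fun x => hw x (SimpleGraph.Walk.mem_support_dropLast_of_mem_support (hcover x)),
    hwlen.trans hlen'⟩

/-- a temporal graph with `n ≥ 2` vertices, connected underlying
graph, every edge of frequency at most `f`, and lifetime `T ≥ f(2n-3)`, can be
explored from any starting vertex by a temporal walk of length at most
`f(2n - 3)`. -/
theorem explore_frequent {V : Type} [Fintype V] (G : TemporalGraph V) (f n : ℕ)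
    (hn : n = Fintype.card V) (h2 : 2 ≤ n)
    (hconn : G.underlying.Connected)
    (hf : ∀ u v : V, G.underlying.Adj u v → G.FreqLE s(u, v) f)
    (hT : f * (2 * n - 3) ≤ G.T) (v : V) :
    ∃ w : G.TWalk v, w.Explores ∧ w.length ≤ f * (2 * n - 3) :=
  explore_frequent_general G f n hn hconn hf hT v
end

section
/- Let W = e_1, ..., e_m be a walk in the underlying graph of a temporal graph G, where edge e_i has frequency f_{e_i}, and suppose the lifetime T satisfies T ≥ Σ_{i=1}^m f_{e_i}. Define t_1 as the first timestep in which e_1 is active, and inductively t_i as the first timestep strictly greater than t_{i−1} in which e_i is active. Then all t_i are well-defined and t_m ≤ Σ_{i=1}^m f_{e_i}. -/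
/-! Take each edge at its first activation after the previous step. If the previous step
happened at time `a ≤ f_1 + ⋯ + f_{k-1}`, then `a + f_k ≤ T`, so the window `a + 1, …, a + f_k`
lies inside the lifetime and contains an activation of `e_k`: the greedy walk waits at most
`f_k` for `e_k`, and the bound follows by induction on `k`. -/

open Finset

/-- Junk value `0` if `P` never holds after `a`. -/
noncomputable def firstAfter (P : ℕ → Prop) (a : ℕ) : ℕ :=
  sInf {s | a < s ∧ P s}

lemma firstAfter_spec {P : ℕ → Prop} {a b : ℕ} (h : ∃ s, a < s ∧ s ≤ b ∧ P s) :
    a < firstAfter P a ∧ P (firstAfter P a) ∧ firstAfter P a ≤ b := by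
  obtain ⟨s, has, hsb, hs⟩ := h
  have hmem : s ∈ {s | a < s ∧ P s} := ⟨has, hs⟩
  obtain ⟨hlt, hP⟩ : a < firstAfter P a ∧ P (firstAfter P a) := Nat.sInf_mem ⟨s, hmem⟩
  exact ⟨hlt, hP, (Nat.sInf_le hmem).trans hsb⟩

lemma not_of_lt_firstAfter {P : ℕ → Prop} {a s : ℕ} (has : a < s) (hs : s < firstAfter P a) :
    ¬ P s :=
  fun hPs => Nat.notMem_of_lt_sInf hs ⟨has, hPs⟩

/-- Step `k` can be taken at the times `s` with `P k s`; the schedule starts at time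
`greedyTimes P 0 = 0` and takes step `k` at time `greedyTimes P (k + 1)`. -/
noncomputable def greedyTimes (P : ℕ → ℕ → Prop) : ℕ → ℕ
  | 0 => 0
  | k + 1 => firstAfter (P k) (greedyTimes P k)

section GreedyTimes

variable {P : ℕ → ℕ → Prop} {F : ℕ → ℕ} {n T : ℕ}

lemma greedyTimes_le_sum (hwin : ∀ k < n, ∀ a, a + F k ≤ T → ∃ s, a < s ∧ s ≤ a + F k ∧ P k s)
    (hT : ∑ k ∈ range n, F k ≤ T) : ∀ k ≤ n, greedyTimes P k ≤ ∑ j ∈ range k, F j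
  | 0, _ => by simp [greedyTimes]
  | k + 1, hk => by
    have ih := greedyTimes_le_sum hwin hT k (by omega)
    have hsum : ∑ j ∈ range (k + 1), F j ≤ T :=
      (sum_le_sum_of_subset (range_subset_range.mpr hk)).trans hT
    rw [sum_range_succ] at hsum ⊢
    have hstep := (firstAfter_spec (hwin k hk (greedyTimes P k) (by omega))).2.2
    exact hstep.trans (by omega)

lemma greedyTimes_succ_spec
    (hwin : ∀ k < n, ∀ a, a + F k ≤ T → ∃ s, a < s ∧ s ≤ a + F k ∧ P k s)
    (hT : ∑ k ∈ range n, F k ≤ T) {k : ℕ} (hk : k < n) :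
    greedyTimes P k < greedyTimes P (k + 1) ∧ P k (greedyTimes P (k + 1)) := by
  have hle := greedyTimes_le_sum hwin hT k hk.le
  have hsum : ∑ j ∈ range (k + 1), F j ≤ T :=
    (sum_le_sum_of_subset (range_subset_range.mpr hk)).trans hT
  rw [sum_range_succ] at hsum
  exact (firstAfter_spec (hwin k hk (greedyTimes P k) (by omega))).imp_right And.left

lemma greedyTimes_strictMonoOn
    (hwin : ∀ k < n, ∀ a, a + F k ≤ T → ∃ s, a < s ∧ s ≤ a + F k ∧ P k s)
    (hT : ∑ k ∈ range n, F k ≤ T) : StrictMonoOn (greedyTimes P) (Set.Iic n) :=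
  strictMonoOn_Iic_of_lt_succ fun _ hk => (greedyTimes_succ_spec hwin hT hk).1

end GreedyTimes

lemma Fin.sum_filter_le_eq_sum_range {M : Type*} [AddCommMonoid M] {m : ℕ} (f : Fin m → M)
    (i : Fin m) :
    ∑ j ∈ univ.filter (· ≤ i), f j = ∑ k ∈ range (i + 1), if h : k < m then f ⟨k, h⟩ else 0 := by
  rw [Finset.filter_ge_eq_Iic, Nat.range_succ_eq_Iic, ← Fin.map_valEmbedding_Iic, sum_map]
  simp

namespace TemporalGraph

lemma FreqLE.exists_active_between {V : Type} {G : TemporalGraph V} {e : Sym2 V}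
    {f : ℕ} (h : G.FreqLE e f) {a : ℕ} (ha : a + f ≤ G.T) :
    ∃ s, a < s ∧ s ≤ a + f ∧ G.active s e := by
  obtain ⟨s, hs, hact⟩ := h.2 (a + 1) le_add_self (by omega)
  rw [mem_Ico] at hs
  exact ⟨s, by omega, by omega, hact⟩

end TemporalGraph

theorem greedy_traversal_bound_general {V : Type} (G : TemporalGraph V) (m : ℕ)
    (vs : Fin (m + 1) → V) (f : Fin m → ℕ)
    (hf : ∀ i : Fin m, G.FreqLE s(vs i.castSucc, vs i.succ) (f i))
    (hT : ∑ i, f i ≤ G.T) :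
    ∃ ts : Fin m → ℕ,
      StrictMono ts ∧
      (∀ i : Fin m, 1 ≤ ts i ∧ ts i ≤ G.T ∧ G.active (ts i) s(vs i.castSucc, vs i.succ)) ∧
      -- each `ts i` is the *first* suitable timestep after the previous one:
      (∀ i : Fin m, ∀ s, 1 ≤ s → s < ts i →
        (∀ hpos : 0 < (i : ℕ),
          ts ⟨(i : ℕ) - 1, lt_of_le_of_lt (Nat.sub_le _ _) i.isLt⟩ < s) →
        ¬ G.active s s(vs i.castSucc, vs i.succ)) ∧
      (∀ i : Fin m, ts i ≤ ∑ j ∈ Finset.univ.filter (· ≤ i), f j) := by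
  set P : ℕ → ℕ → Prop := fun k s =>
    ∀ h : k < m, G.active s s(vs (Fin.castSucc ⟨k, h⟩), vs (Fin.succ ⟨k, h⟩))
  set F : ℕ → ℕ := fun k => if h : k < m then f ⟨k, h⟩ else 0
  have hwin : ∀ k < m, ∀ a, a + F k ≤ G.T → ∃ s, a < s ∧ s ≤ a + F k ∧ P k s := by
    intro k hk a ha
    simp only [F, dif_pos hk] at ha ⊢
    obtain ⟨s, has, hsa, hact⟩ := (hf ⟨k, hk⟩).exists_active_between ha
    exact ⟨s, has, hsa, fun _ => hact⟩
  have hsum : ∑ k ∈ range m, F k ≤ G.T := by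
    simpa [F, ← Fin.sum_univ_eq_sum_range] using hT
  have hbound (i : Fin m) : greedyTimes P (i + 1) ≤ ∑ j ∈ univ.filter (· ≤ i), f j := by
    rw [Fin.sum_filter_le_eq_sum_range]
    exact greedyTimes_le_sum hwin hsum _ i.isLt
  refine ⟨fun i => greedyTimes P (i + 1), fun i j hij => ?_, fun i => ⟨?_, ?_, ?_⟩, ?_, hbound⟩
  · exact greedyTimes_strictMonoOn hwin hsum (Set.mem_Iic.mpr i.isLt) (Set.mem_Iic.mpr j.isLt)
      (by simpa using hij)
  · exact Nat.one_le_of_lt (greedyTimes_succ_spec hwin hsum i.isLt).1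
  · exact (hbound i).trans ((sum_le_sum_of_subset (filter_subset _ _)).trans hT)
  · exact (greedyTimes_succ_spec hwin hsum i.isLt).2 i.isLt
  · intro i s hs1 hslt hprev hact
    have hstart : greedyTimes P i < s := by
      rcases Nat.eq_zero_or_pos i with h0 | hpos
      · simpa [h0, greedyTimes] using Nat.lt_of_succ_le hs1
      · simpa [Nat.sub_add_cancel hpos] using hprev hpos
    exact not_of_lt_firstAfter hstart hslt fun _ => hact

/-- along a walk `e_1, …, e_m` in the underlying graph (given by
its vertex sequence `vs`), with edge `e_i` of frequency at most `f i` and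
lifetime `T ≥ Σ f i`, the greedy timesteps (`t_1` the first timestep where
`e_1` is active, and `t_i` the first timestep after `t_{i-1}` where `e_i` is
active) are all well-defined, and `t_m ≤ Σ f i`. -/
theorem greedy_traversal_bound {V : Type} (G : TemporalGraph V) (m : ℕ)
    (vs : Fin (m + 1) → V) (f : Fin m → ℕ)
    (hwalk : ∀ i : Fin m, G.underlying.Adj (vs i.castSucc) (vs i.succ))
    (hf : ∀ i : Fin m, G.FreqLE s(vs i.castSucc, vs i.succ) (f i))
    (hT : ∑ i, f i ≤ G.T) :
    ∃ ts : Fin m → ℕ,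
      StrictMono ts ∧
      (∀ i : Fin m, 1 ≤ ts i ∧ ts i ≤ G.T ∧ G.active (ts i) s(vs i.castSucc, vs i.succ)) ∧
      -- each `ts i` is the *first* suitable timestep after the previous one:
      (∀ i : Fin m, ∀ s, 1 ≤ s → s < ts i →
        (∀ hpos : 0 < (i : ℕ),
          ts ⟨(i : ℕ) - 1, lt_of_le_of_lt (Nat.sub_le _ _) i.isLt⟩ < s) →
        ¬ G.active s s(vs i.castSucc, vs i.succ)) ∧
      (∀ i : Fin m, ts i ≤ ∑ j ∈ Finset.univ.filter (· ≤ i), f j) :=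
  greedy_traversal_bound_general G m vs f hf hT
end

section
/- For every r ≥ 1 and n ≥ 3, there exists an r-regular temporal graph on n vertices (namely a temporally scheduled star) and a starting vertex such that every temporal walk exploring the graph from that vertex has length at least r(2n − 5) + 1. -/
/-! In the star whose edge `v₁v₂` is always present and whose other edges appear only at the
times `≡ 1 (mod r)`, an agent starting at the leaf `v₂` has to enter each of the `n - 2` other
leaves through the centre `v₁` and leave it again, except possibly the leaf where it stops.
This takes at least `2n - 5` steps along the rare edges, at pairwise distinct times `kr + 1`;
since time `1` is spent leaving `v₂`, all these `k` are positive, so the largest one is at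
least `2n - 5`. -/

open Finset

theorem Nat.mul_card_add_one_le_of_forall_modEq {r B : ℕ} {S : Finset ℕ}
    (hS : ∀ t ∈ S, t ≡ 1 [MOD r] ∧ 1 < t ∧ t ≤ B) (hne : S.Nonempty) :
    r * #S + 1 ≤ B := by
  obtain ⟨t₀, ht₀⟩ := hne
  have hr : r ≠ 0 := by
    rintro rfl
    obtain ⟨h, h1, -⟩ := hS t₀ ht₀
    rw [Nat.modEq_zero_iff] at h
    omega
  have hdecomp : ∀ t ∈ S, r * ((t - 1) / r) + 1 = t := fun t ht => by
    have hdvd : r ∣ t - 1 := (Nat.modEq_iff_dvd' (hS t ht).2.1.le).1 (hS t ht).1.symm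
    have := Nat.mul_div_cancel' hdvd
    have := (hS t ht).2.1
    omega
  have hmaps : ∀ t ∈ S, (t - 1) / r ∈ Icc 1 ((B - 1) / r) := fun t ht => by
    obtain ⟨-, h1, hB⟩ := hS t ht
    have := hdecomp t ht
    refine mem_Icc.2 ⟨?_, Nat.div_le_div_right (by omega)⟩
    exact Nat.pos_of_ne_zero fun h => by rw [h] at this; omega
  have hinj : Set.InjOn (fun t => (t - 1) / r) S := fun t ht t' ht' h => by
    rw [← hdecomp t ht, ← hdecomp t' ht']
    exact congrArg _ (congrArg _ h)
  have hcard : #S ≤ (B - 1) / r := by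
    simpa using card_le_card_of_injOn _ hmaps hinj
  have := (Nat.mul_le_mul_left r hcard).trans (Nat.mul_div_le (B - 1) r)
  have := (hS t₀ ht₀).2
  omega

namespace TemporalGraph

variable {V : Type}

namespace TWalk

variable {G : TemporalGraph V} {start : V} (w : G.TWalk start) [DecidableEq V]

def stepsAt (v : V) : Finset (Fin w.m) :=
  univ.filter fun i => v ∈ s(w.vs i.castSucc, w.vs i.succ)

theorem two_le_card_stepsAt_add_ite (hw : w.Explores) {v : V} (hv : v ≠ start) :
    2 ≤ #(w.stepsAt v) + if v = w.vs (Fin.last w.m) then 1 else 0 := by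
  obtain ⟨j, rfl⟩ := hw v
  have hj : j ≠ 0 := fun h => hv (h ▸ w.start_eq)
  obtain ⟨i, rfl⟩ := Fin.exists_succ_eq.2 hj
  have hi : i ∈ w.stepsAt (w.vs i.succ) := by simp [stepsAt]
  split_ifs with hlast
  · have := card_pos.2 ⟨i, hi⟩
    omega
  · obtain ⟨k, hk⟩ := Fin.exists_castSucc_eq.2 fun h => hlast (congrArg w.vs h)
    have hk' : k ∈ w.stepsAt (w.vs i.succ) := by simp [stepsAt, hk]
    have hki : i ≠ k := by
      rintro rfl
      exact Fin.castSucc_lt_succ.ne hk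
    calc 2 = #{i, k} := (card_pair hki).symm
      _ ≤ #(w.stepsAt (w.vs i.succ)) := card_le_card (by simp [insert_subset_iff, hi, hk'])

theorem two_mul_card_le_sum_card_stepsAt_add_one (hw : w.Explores) {F : Finset V}
    (hF : start ∉ F) : 2 * #F ≤ ∑ v ∈ F, #(w.stepsAt v) + 1 := by
  calc 2 * #F = ∑ v ∈ F, 2 := by rw [sum_const, smul_eq_mul, mul_comm]
    _ ≤ ∑ v ∈ F, (#(w.stepsAt v) + if v = w.vs (Fin.last w.m) then 1 else 0) :=
      sum_le_sum fun v hv => w.two_le_card_stepsAt_add_ite hw (ne_of_mem_of_not_mem hv hF)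
    _ ≤ ∑ v ∈ F, #(w.stepsAt v) + 1 := by
      rw [sum_add_distrib, sum_ite_eq']
      split_ifs <;> omega

theorem pairwiseDisjoint_stepsAt {c : V}
    (hc : ∀ i : Fin w.m, c ∈ s(w.vs i.castSucc, w.vs i.succ)) :
    ({c}ᶜ : Set V).PairwiseDisjoint w.stepsAt := by
  intro v hv v' hv' hne
  rw [Function.onFun, disjoint_left]
  intro i hi hi'
  simp only [stepsAt, mem_filter, mem_univ, true_and] at hi hi'
  rw [(Sym2.mem_and_mem_iff (Ne.symm hv)).1 ⟨hc i, hi⟩, Sym2.mem_iff] at hi'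
  exact hi'.elim hv' hne.symm

end TWalk

def scheduledStar (T r : ℕ) (c a : V) : TemporalGraph V where
  T := T
  active t e := c ∈ e ∧ (e = s(c, a) ∨ t ≡ 1 [MOD r])

variable {T r : ℕ} {c a : V}

theorem scheduledStar_active_congr {t t' : ℕ} (h : t ≡ t' [MOD r]) (e : Sym2 V) :
    (scheduledStar T r c a).active t e ↔ (scheduledStar T r c a).active t' e :=
  and_congr_right' (or_congr_right ⟨h.symm.trans, h.trans⟩)

theorem scheduledStar_regular (hr : 0 < r) (e : Sym2 V) :
    (scheduledStar T r c a).Regular e r := by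
  refine ⟨hr, fun t ht _ => ⟨scheduledStar_active_congr ?_ e,
    scheduledStar_active_congr Nat.add_modEq_right.symm e⟩⟩
  have h := Nat.add_modEq_right (a := t - r) (n := r)
  rw [Nat.sub_add_cancel (by omega)] at h
  exact h.symm

theorem modEq_one_and_one_lt_of_mem_stepsAt [DecidableEq V] (hca : c ≠ a)
    (w : (scheduledStar T r c a).TWalk a) {v : V} (hvc : v ≠ c) (hva : v ≠ a) {i : Fin w.m}
    (hi : i ∈ w.stepsAt v) : w.ts i ≡ 1 [MOD r] ∧ 1 < w.ts i := by
  obtain ⟨hc, hcases⟩ := w.steps i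
  have hedge : s(w.vs i.castSucc, w.vs i.succ) = s(c, v) :=
    (Sym2.mem_and_mem_iff hvc.symm).1 ⟨hc, (mem_filter.1 hi).2⟩
  refine ⟨hcases.resolve_left fun h => hva (Sym2.congr_right.1 (hedge.symm.trans h)), ?_⟩
  have hi0 : (i : ℕ) ≠ 0 := by
    intro h0
    have hstart : w.vs i.castSucc = a := (congrArg w.vs (Fin.ext h0)).trans w.start_eq
    have ha : w.vs i.castSucc ∈ s(c, v) := hedge ▸ Sym2.mem_mk_left _ _
    rw [hstart] at ha
    rcases Sym2.mem_iff.1 ha with h | h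
    exacts [hca h.symm, hva h.symm]
  calc 1 ≤ w.ts ⟨0, i.pos⟩ := w.time_ge _
    _ < w.ts i := w.mono (Fin.lt_def.2 (Nat.pos_of_ne_zero hi0))

theorem scheduledStar_length_ge [Fintype V] [DecidableEq V] (hca : c ≠ a)
    (w : (scheduledStar T r c a).TWalk a) (hw : w.Explores)
    (hfar : ({c, a}ᶜ : Finset V).Nonempty) :
    r * (2 * #({c, a}ᶜ : Finset V) - 1) + 1 ≤ w.length := by
  set F : Finset V := {c, a}ᶜ
  have hF : ∀ v ∈ F, v ≠ c ∧ v ≠ a := by simp [F]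
  set S := F.biUnion w.stepsAt
  have hS : 2 * #F ≤ #S + 1 := by
    rw [card_biUnion ((w.pairwiseDisjoint_stepsAt fun i => (w.steps i).1).subset
      fun v hv => (hF v hv).1)]
    exact w.two_mul_card_le_sum_card_stepsAt_add_one hw (by simp [F])
  have htimes : r * #(S.image w.ts) + 1 ≤ w.length := by
    refine Nat.mul_card_add_one_le_of_forall_modEq (fun t ht => ?_) ?_
    · obtain ⟨i, hi, rfl⟩ := mem_image.1 ht
      obtain ⟨v, hv, hiv⟩ := mem_biUnion.1 hi
      obtain ⟨hmod, hlt⟩ :=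
        modEq_one_and_one_lt_of_mem_stepsAt hca w (hF v hv).1 (hF v hv).2 hiv
      exact ⟨hmod, hlt, le_sup (f := w.ts) (mem_univ i)⟩
    · have := hfar.card_pos
      exact image_nonempty.2 (card_pos.1 (by omega))
  rw [card_image_of_injective _ w.mono.injective] at htimes
  calc r * (2 * #F - 1) + 1 ≤ r * #S + 1 := by gcongr; omega
    _ ≤ w.length := htimes

end TemporalGraph

open TemporalGraph

def starTour (r n : ℕ) (hr : 0 < r) (hn : 3 ≤ n) :
    (scheduledStar (r * (2 * n - 1)) r (⟨0, by omega⟩ : Fin n) ⟨1, by omega⟩).TWalk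
      ⟨1, by omega⟩ where
  m := 2 * n - 4
  vs k := if k.val % 2 = 1 then ⟨0, by omega⟩ else ⟨k / 2 + 1, by omega⟩
  ts i := r * i + 1
  start_eq := by simp
  mono i j h := by simpa using (Nat.mul_lt_mul_left hr).2 h
  time_ge _ := Nat.le_add_left 1 _
  time_le i := by
    have := Nat.mul_le_mul_left r (show (i : ℕ) + 1 ≤ 2 * n - 1 by omega)
    rw [mul_add_one] at this
    simp only [scheduledStar]
    omega
  steps i := by
    refine ⟨?_, Or.inr ?_⟩
    · simp only [Fin.val_castSucc, Fin.val_succ, Sym2.mem_iff]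
      split_ifs <;> omega
    · simp [Nat.ModEq]

theorem starTour_explores (r n : ℕ) (hr : 0 < r) (hn : 3 ≤ n) :
    (starTour r n hr hn).Explores := by
  rintro ⟨v, hv⟩
  match v with
  | 0 => exact ⟨⟨1, by simp [starTour]; omega⟩, by simp [starTour]⟩
  | 1 => exact ⟨0, by simp [starTour]⟩
  | k + 2 => exact ⟨⟨2 * k + 2, by simp [starTour]; omega⟩, by simp [starTour]⟩

/-- for every `r ≥ 1` and `n ≥ 3` there is an `r`-regular temporal
graph on `n` vertices (a temporally scheduled star) and a starting vertex such
that the graph is explorable, but every exploring temporal walk from that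
vertex has length at least `r(2n - 5) + 1`. -/
theorem regular_lower_bound (r n : ℕ) (hr : 1 ≤ r) (hn : 3 ≤ n) :
    ∃ G : TemporalGraph (Fin n),
      (∀ u v : Fin n, G.underlying.Adj u v → ∃ r' ≤ r, G.Regular s(u, v) r') ∧
      ∃ start : Fin n,
        (∃ w : G.TWalk start, w.Explores) ∧
        ∀ w : G.TWalk start, w.Explores → r * (2 * n - 5) + 1 ≤ w.length := by
  have hca : (⟨0, by omega⟩ : Fin n) ≠ ⟨1, by omega⟩ := by simp
  have hfar : #({⟨0, by omega⟩, ⟨1, by omega⟩}ᶜ : Finset (Fin n)) = n - 2 := by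
    rw [card_compl, card_pair hca, Fintype.card_fin]
  refine ⟨_, fun u v _ => ⟨r, le_rfl, scheduledStar_regular hr _⟩, _,
    ⟨starTour r n hr hn, starTour_explores r n hr hn⟩, fun w hw => ?_⟩
  have := scheduledStar_length_ge hca w hw (card_pos.1 (by omega))
  rwa [hfar, show 2 * (n - 2) - 1 = 2 * n - 5 by omega] at this
end

section
/- In the temporal star graph on n ≥ 3 vertices where all edges are active at timesteps t ≡ 1 (mod r) and only the edge (v_1, v_2) is active otherwise, any temporal walk starting at v_2 that explores the graph must traverse at least 2n − 5 edges, and between any two consecutive traversals of edges both incident to the center v_1, at least r timesteps must elapse (apart from traversals of (v_1,v_2) at non-congruent timesteps). -/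
namespace TemporalGraph

variable {V : Type}

def IsStar (G : TemporalGraph V) (c : V) : Prop :=
  ∀ t e, G.active t e → ∃ x, x ≠ c ∧ e = s(c, x)

namespace TWalk

variable {G : TemporalGraph V} {c start : V}

theorem vs_succ_eq_center_iff (hG : G.IsStar c) (w : G.TWalk start) (i : Fin w.m) :
    w.vs i.succ = c ↔ w.vs i.castSucc ≠ c := by
  obtain ⟨x, hxc, hx⟩ := hG _ _ (w.steps i)
  rcases Sym2.eq_iff.mp hx with ⟨h₁, h₂⟩ | ⟨h₁, h₂⟩ <;> simp [h₁, h₂, hxc]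

theorem vs_eq_center_iff_odd (hG : G.IsStar c) (hs : start ≠ c) (w : G.TWalk start)
    (k : Fin (w.m + 1)) : w.vs k = c ↔ Odd (k : ℕ) := by
  induction k using Fin.induction with
  | zero => simpa [w.start_eq] using hs
  | succ i ih =>
    rw [vs_succ_eq_center_iff hG, ne_eq, ih, Fin.val_succ, Fin.val_castSucc, Nat.odd_add_one]

theorem card_le_of_explores [Fintype V] [DecidableEq V] (hG : G.IsStar c) (hs : start ≠ c)
    (w : G.TWalk start) (hw : w.Explores) : Fintype.card V ≤ w.m / 2 + 2 := by
  have hcover : Finset.univ.erase c ⊆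
      Finset.univ.image fun k : Fin (w.m / 2 + 1) => w.vs ⟨2 * k, by omega⟩ := by
    intro v hv
    obtain ⟨p, rfl⟩ := hw v
    have hp : Even (p : ℕ) := Nat.not_odd_iff_even.mp fun hodd =>
      (Finset.ne_of_mem_erase hv) ((vs_eq_center_iff_odd hG hs w p).mpr hodd)
    obtain ⟨j, hj⟩ := hp
    refine Finset.mem_image.mpr ⟨⟨j, by omega⟩, Finset.mem_univ _, congrArg w.vs ?_⟩
    ext
    exact (two_mul j).trans hj.symm
  have := (Finset.card_le_card hcover).trans Finset.card_image_le
  rw [Finset.card_erase_of_mem (Finset.mem_univ c), Finset.card_univ, Finset.card_univ,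
    Fintype.card_fin] at this
  omega

end TWalk

end TemporalGraph

/-- in the temporal star on `n ≥ 3` vertices (center `v₁ = 0`,
all edges active at timesteps `t ≡ 1 (mod r)`, only the edge `(v₁, v₂)` active
otherwise), any exploring temporal walk starting at `v₂ = 1` traverses at least
`2n - 5` edges, and between any two consecutive traversals of edges other than
`(v₁, v₂)`-at-non-congruent-timesteps at least `r` timesteps elapse. -/
theorem star_walk_structure (n r : ℕ) (hn : 3 ≤ n)
    (G : TemporalGraph (Fin n))
    (hact : ∀ t (e : Sym2 (Fin n)), G.active t e ↔
      (1 ≤ t ∧ t ≤ G.T ∧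
        ((t % r = 1 % r ∧ ∃ i : Fin n, i ≠ ⟨0, by omega⟩ ∧ e = s((⟨0, by omega⟩ : Fin n), i)) ∨
          e = s((⟨0, by omega⟩ : Fin n), (⟨1, by omega⟩ : Fin n)))))
    (w : G.TWalk (⟨1, by omega⟩ : Fin n)) (hw : w.Explores) :
    2 * n - 5 ≤ w.m ∧
    ∀ i j : Fin w.m, (i : ℕ) + 1 = (j : ℕ) →
      s(w.vs i.castSucc, w.vs i.succ) ≠ s((⟨0, by omega⟩ : Fin n), (⟨1, by omega⟩ : Fin n)) →
      s(w.vs j.castSucc, w.vs j.succ) ≠ s((⟨0, by omega⟩ : Fin n), (⟨1, by omega⟩ : Fin n)) →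
      w.ts i + r ≤ w.ts j := by
  have h10 : (⟨1, by omega⟩ : Fin n) ≠ ⟨0, by omega⟩ := by simp
  have hstar : G.IsStar ⟨0, by omega⟩ := fun t e he => by
    rcases ((hact t e).mp he).2.2 with ⟨-, hcenter⟩ | h01
    · exact hcenter
    · exact ⟨_, h10, h01⟩
  have hcong : ∀ k : Fin w.m,
      s(w.vs k.castSucc, w.vs k.succ) ≠ s((⟨0, by omega⟩ : Fin n), ⟨1, by omega⟩) →
      w.ts k ≡ 1 [MOD r] := fun k hk => by
    rcases ((hact _ _).mp (w.steps k)).2.2 with ⟨hmod, -⟩ | h01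
    · exact hmod
    · exact absurd h01 hk
  refine ⟨?_, fun i j hij hi hj => ?_⟩
  · have := w.card_le_of_explores hstar h10 hw
    rw [Fintype.card_fin] at this
    omega
  · exact ((hcong i hi).trans (hcong j hj).symm).add_le_of_lt (w.mono (by omega))
end

section
/- A public transport graph on n ≥ 2 vertices whose underlying graph is connected, composed of routes W_1, ..., W_m with periods L_1, ..., L_m, can be explored from any starting vertex by a temporal walk of length at most (2n − 3)·max_i L_i, provided the lifetime is at least this long. -/
/-- Public transport graph hypothesis: the temporal graph `G` is generated by
`m` routes; route `i` consists of edges `W i 1, …, W i (k i)` scheduled at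
strictly increasing timesteps `sched i`, repeated with period `L i` (the
timestep of its last edge). An edge is active at timestep `t` iff it occurs on
some route at a timestep congruent to `t` modulo the period of that route. -/
def IsPublicTransport {V : Type} (G : TemporalGraph V) (m : ℕ) (k : Fin m → ℕ)
    (W : ∀ i : Fin m, Fin (k i) → Sym2 V) (sched : ∀ i : Fin m, Fin (k i) → ℕ)
    (L : Fin m → ℕ) : Prop :=
  (∀ i, 0 < k i) ∧
  (∀ i j, 1 ≤ sched i j) ∧
  (∀ i, StrictMono (sched i)) ∧
  (∀ i (j : Fin (k i)), (j : ℕ) = k i - 1 → L i = sched i j) ∧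
  (∀ t (e : Sym2 V), G.active t e ↔
    (1 ≤ t ∧ t ≤ G.T ∧ ∃ i j, e = W i j ∧ sched i j % L i = t % L i))

/-!
Take a walk `v = x₀, x₁, …, x_ℓ` in the underlying graph that visits every vertex: starting from
an edge at `v` and splicing a detour `x → u → x` into the walk for each missing vertex `u`, with
`x` a visited neighbour of `u`, one gets `ℓ ≤ 1 + 2(n - 2) = 2n - 3`. In a public transport
graph every edge of a route with period `L i ≤ S := max L` is active in every `S` consecutive
timesteps, so the `i`-th step of the walk can be taken at some timestep in `(iS, (i + 1)S]`, and
these timesteps increase strictly.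
-/

open Finset

namespace SimpleGraph.Walk

variable {V : Type} {G : SimpleGraph V}

lemma exists_detour [DecidableEq V] {v w x u : V} (p : G.Walk v w) (hx : x ∈ p.support)
    (hxu : G.Adj x u) :
    ∃ q : G.Walk v w, q.length = p.length + 2 ∧
      insert u p.support.toFinset ⊆ q.support.toFinset := by
  refine ⟨(p.takeUntil x hx).append (cons hxu (cons hxu.symm (p.dropUntil x hx))), ?_, ?_⟩
  · have hlen := congrArg length (p.take_spec hx)
    simp only [length_append, length_cons] at hlen ⊢
    omega
  · have hsupp := congrArg support (p.take_spec hx)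
    rw [support_append] at hsupp
    intro y hy
    simp only [mem_insert, List.mem_toFinset, ← hsupp, List.mem_append] at hy
    simp only [List.mem_toFinset, support_append, support_cons, List.tail_cons, List.mem_append,
      List.mem_cons]
    rcases hy with rfl | hy | hy
    · simp
    · exact .inl hy
    · simp [List.mem_of_mem_tail hy]

lemma exists_covering_extension [Fintype V] [DecidableEq V] (hG : G.Connected) {v w : V}
    (p : G.Walk v w) :
    ∃ q : G.Walk v w, (∀ y, y ∈ q.support) ∧
      q.length ≤ p.length + 2 * #p.support.toFinsetᶜ := by
  by_cases hall : ∀ y, y ∈ p.support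
  · exact ⟨p, hall, Nat.le_add_right _ _⟩
  obtain ⟨u, hu⟩ := not_forall.mp hall
  obtain ⟨d, -, hd, hd'⟩ :=
    (hG v u).some.exists_boundary_dart {y | y ∈ p.support} p.start_mem_support hu
  obtain ⟨q, hq, hsub⟩ := p.exists_detour hd d.adj
  have hlt : #q.support.toFinsetᶜ < #p.support.toFinsetᶜ :=
    card_lt_card <| compl_ssubset_compl.mpr <|
      (ssubset_insert (by simpa using hd')).trans_subset hsub
  obtain ⟨r, hr, hrlen⟩ := exists_covering_extension hG q
  exact ⟨r, hr, by omega⟩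
termination_by #p.support.toFinsetᶜ

end SimpleGraph.Walk

lemma SimpleGraph.Connected.exists_covering_walk_length_le {V : Type} [Fintype V]
    {G : SimpleGraph V} (hG : G.Connected) (v : V) (hV : 2 ≤ Fintype.card V) :
    ∃ (w : V) (p : G.Walk v w), (∀ y, y ∈ p.support) ∧ p.length ≤ 2 * Fintype.card V - 3 := by
  classical
  have : Nontrivial V := Fintype.one_lt_card_iff_nontrivial.mp hV
  obtain ⟨u, hvu⟩ := hG.preconnected.exists_adj_of_nontrivial v
  let edge : G.Walk v u := .cons hvu .nil
  obtain ⟨q, hq, hqlen⟩ := edge.exists_covering_extension hG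
  have hmissing : #edge.support.toFinsetᶜ = Fintype.card V - 2 := by
    rw [card_compl]
    simp [edge, hvu.ne]
  rw [hmissing] at hqlen
  exact ⟨u, q, hq, by simp only [edge, SimpleGraph.Walk.length_cons,
    SimpleGraph.Walk.length_nil] at hqlen; omega⟩

namespace TemporalGraph

variable {V : Type} {G : TemporalGraph V}

lemma exists_twalk_of_walk {f : ℕ} (hf : ∀ x y, G.underlying.Adj x y → G.FreqLE s(x, y) f)
    {v w : V} (p : G.underlying.Walk v w) (hT : p.length * f ≤ G.T) :
    ∃ tw : G.TWalk v, (∀ x ∈ p.support, ∃ i, tw.vs i = x) ∧ tw.length ≤ p.length * f := by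
  have hstep_le (i : Fin p.length) : (i + 1) * f ≤ p.length * f :=
    Nat.mul_le_mul_right f i.isLt
  have hwindow (i : Fin p.length) :
      ∃ s ∈ Ico (i * f + 1) (i * f + 1 + f), G.active s s(p.getVert i, p.getVert (i + 1)) :=
    (hf _ _ (p.adj_getVert_succ i.isLt)).2 _ le_add_self
      (by have := hstep_le i; rw [add_one_mul] at this; omega)
  choose ts hts hact using hwindow
  have hts_gt (i : Fin p.length) : i * f < ts i := by have := mem_Ico.mp (hts i); omega
  have hts_le (i : Fin p.length) : ts i ≤ (i + 1) * f := by
    have := mem_Ico.mp (hts i); rw [add_one_mul]; omega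
  refine ⟨⟨p.length, fun i => p.getVert i, ts, by simp, fun i j hij => ?_,
      fun i => (hts_gt i).trans_le' (Nat.zero_le _),
      fun i => (hts_le i).trans ((hstep_le i).trans hT), fun i => by simpa using hact i⟩,
    fun x hx => ?_, Finset.sup_le fun i _ => (hts_le i).trans (hstep_le i)⟩
  · calc ts i ≤ (i + 1) * f := hts_le i
      _ ≤ j * f := Nat.mul_le_mul_right f (Fin.lt_def.mp hij)
      _ < ts j := hts_gt j
  · obtain ⟨n, rfl, hn⟩ := SimpleGraph.Walk.mem_support_iff_exists_getVert.mp hx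
    exact ⟨⟨n, Nat.lt_succ_of_le hn⟩, rfl⟩

end TemporalGraph

lemma IsPublicTransport.freqLE_sup {V : Type} {G : TemporalGraph V} {m : ℕ} {k : Fin m → ℕ}
    {W : ∀ i : Fin m, Fin (k i) → Sym2 V} {sched : ∀ i : Fin m, Fin (k i) → ℕ} {L : Fin m → ℕ}
    (hPT : IsPublicTransport G m k W sched L) {e : Sym2 V} {t₀ : ℕ} (he : G.active t₀ e) :
    G.FreqLE e (univ.sup L) := by
  obtain ⟨hk, hpos, -, hlast, hact⟩ := hPT
  obtain ⟨-, -, i, j, rfl, -⟩ := (hact t₀ _).mp he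
  have hLi : 0 < L i := by
    rw [hlast i ⟨k i - 1, Nat.sub_lt (hk i) one_pos⟩ rfl]
    exact hpos _ _
  have hLS : L i ≤ univ.sup L := le_sup (mem_univ i)
  refine ⟨hLi.trans_le hLS, fun t ht htT => ?_⟩
  obtain ⟨s, hs, hmod⟩ : ∃ s ∈ Ico t (t + L i), s % L i = sched i j % L i := by
    rw [← mem_image, Nat.image_Ico_mod]
    exact mem_range.mpr (Nat.mod_lt _ hLi)
  rw [mem_Ico] at hs
  exact ⟨s, mem_Ico.mpr ⟨hs.1, by omega⟩, (hact s _).mpr ⟨by omega, by omega, i, j, rfl, hmod.symm⟩⟩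

/-- a public transport graph on `n ≥ 2` vertices with connected
underlying graph and lifetime at least `(2n - 3) · max_i L i` can be explored
from any starting vertex by a temporal walk of length at most
`(2n - 3) · max_i L i`. -/
theorem public_transport_exploration {V : Type} [Fintype V] (G : TemporalGraph V)
    (m n : ℕ) (k : Fin m → ℕ) (W : ∀ i : Fin m, Fin (k i) → Sym2 V)
    (sched : ∀ i : Fin m, Fin (k i) → ℕ) (L : Fin m → ℕ)
    (hPT : IsPublicTransport G m k W sched L)
    (hn : n = Fintype.card V) (h2 : 2 ≤ n)
    (hconn : G.underlying.Connected)
    (hT : (2 * n - 3) * Finset.univ.sup L ≤ G.T) (v : V) :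
    ∃ w : G.TWalk v, w.Explores ∧ w.length ≤ (2 * n - 3) * Finset.univ.sup L := by
  subst hn
  obtain ⟨_, p, hp, hlen⟩ := hconn.exists_covering_walk_length_le v h2
  have hlen' := Nat.mul_le_mul_right (univ.sup L) hlen
  obtain ⟨tw, hcov, htw⟩ := TemporalGraph.exists_twalk_of_walk
    (fun _ _ ⟨_, _, _, ht⟩ => hPT.freqLE_sup ht) p (hlen'.trans hT)
  exact ⟨tw, fun x => hcov x (hp x), htw.trans hlen'⟩
end

section
/- In a broadcast network, if v is a vertex active at timesteps t and t' with t < t' and inactive strictly between them, and u_1, u_2, ..., u_ℓ is a path in the underlying graph starting at a neighbour u_1 of v, then the number of timesteps in [t+1, t'−1] at which u_i is active is at most i for each i; in particular any neighbour of v is active at most once strictly between consecutive activations of v. -/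
/-- A broadcast network: a static graph `H` together with, for each timestep
`t ∈ [1, T]`, a set of active (broadcasting) vertices `A t`; a vertex active at
two timesteps `t₁ < t₂` requires each of its neighbours to be active at some
timestep in `[t₁, t₂ - 1]`. -/
structure BroadcastNetwork (V : Type) where
  T : ℕ
  H : SimpleGraph V
  A : ℕ → V → Prop
  sync : ∀ v t₁ t₂, 1 ≤ t₁ → t₂ ≤ T → t₁ < t₂ → A t₁ v → A t₂ v →
    ∀ u, H.Adj v u → ∃ s ∈ Finset.Icc t₁ (t₂ - 1), A s u

namespace BroadcastNetwork

variable {V : Type}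

/-- Vertex `v` has frequency at most `f`: it is active at least once in every
window of `f` consecutive timesteps within `[1, T]`. -/
def VFreqLE (B : BroadcastNetwork V) (v : V) (f : ℕ) : Prop :=
  0 < f ∧ ∀ t, 1 ≤ t → t + f ≤ B.T + 1 → ∃ s ∈ Finset.Ico t (t + f), B.A s v

/-- The snapshot at timestep `t`: edges of `H` with at least one broadcasting
endpoint. -/
def snapshot (B : BroadcastNetwork V) (t : ℕ) : SimpleGraph V where
  Adj u w := B.H.Adj u w ∧ (B.A t u ∨ B.A t w)
  symm := by
    constructor
    intro u w h
    exact ⟨h.1.symm, h.2.symm⟩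
  loopless := ⟨fun v h => B.H.loopless.irrefl v h.1⟩

/-- The broadcast network is always connected: every snapshot is connected. -/
def AlwaysConnected (B : BroadcastNetwork V) : Prop :=
  ∀ t, 1 ≤ t → t ≤ B.T → (B.snapshot t).Connected

/-- A temporal walk in a broadcast network: each step moves along an edge of
`H` one of whose traversal is available because its tail is broadcasting. -/
structure BWalk (B : BroadcastNetwork V) (start : V) where
  m : ℕ
  vs : Fin (m + 1) → V
  ts : Fin m → ℕ
  start_eq : vs 0 = start
  mono : StrictMono ts
  time_ge : ∀ i, 1 ≤ ts i
  time_le : ∀ i, ts i ≤ B.T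
  steps : ∀ i : Fin m, B.H.Adj (vs i.castSucc) (vs i.succ) ∧ B.A (ts i) (vs i.castSucc)

/-- A walk explores the network if it visits every vertex. -/
def BWalk.Explores {B : BroadcastNetwork V} {start : V} (w : B.BWalk start) : Prop :=
  Function.Surjective w.vs

/-- The length of a walk: its final timestep. -/
def BWalk.length {B : BroadcastNetwork V} {start : V} (w : B.BWalk start) : ℕ :=
  Finset.univ.sup w.ts

end BroadcastNetwork

/-!
Let `w` and `x` be neighbours. Between two consecutive activations `s < n` of `w`, the broadcast
rule makes `x` active at some time in `[s, n - 1]`, so in any window of time the activations of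
`x` separate those of `w`, and `w` is active at most once more than `x`. Along the path
`v, u 0, u 1, …` the number of activations in `[t + 1, t' - 1]` therefore grows by at most one
per step, starting from zero activations of `v`.
-/

open Finset in
theorem Finset.card_le_card_add_one_of_separated {α : Type*} [LinearOrder α] (S X : Finset α)
    (hsep : ∀ s ∈ S, ∀ n ∈ S, s < n → ∃ r ∈ X, s ≤ r ∧ r < n) :
    #S ≤ #X + 1 := by
  induction S using Finset.induction_on_max generalizing X with
  | empty => simp
  | insert m S hlt ih =>
    rcases S.eq_empty_or_nonempty with rfl | hS
    · simp
    set s := S.max' hS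
    obtain ⟨r, hrX, hsr, -⟩ :=
      hsep s (mem_insert_of_mem (S.max'_mem hS)) m (mem_insert_self m S) (hlt s (S.max'_mem hS))
    -- the separators needed inside `S` lie below `s = max S`, whereas `r` does not
    have hsepS : ∀ a ∈ S, ∀ b ∈ S, a < b → ∃ r ∈ X.filter (· < s), a ≤ r ∧ r < b := by
      intro a ha b hb hab
      obtain ⟨r', hr'X, har', hr'b⟩ := hsep a (mem_insert_of_mem ha) b (mem_insert_of_mem hb) hab
      exact ⟨r', mem_filter.mpr ⟨hr'X, hr'b.trans_le (S.le_max' b hb)⟩, har', hr'b⟩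
    have hfilter : #(X.filter (· < s)) < #X :=
      card_lt_card (filter_ssubset.mpr ⟨r, hrX, not_lt.mpr hsr⟩)
    have hm : m ∉ S := fun hmS => (hlt m hmS).false
    rw [card_insert_of_notMem hm]
    have hS_card := ih (X.filter (· < s)) hsepS
    omega

namespace BroadcastNetwork

variable {V : Type}

open Finset

open Classical in
noncomputable def activeTimes (B : BroadcastNetwork V) (a b : ℕ) (x : V) : Finset ℕ :=
  (Finset.Icc a b).filter (B.A · x)

theorem mem_activeTimes {B : BroadcastNetwork V} {a b s : ℕ} {x : V} :
    s ∈ B.activeTimes a b x ↔ (a ≤ s ∧ s ≤ b) ∧ B.A s x := by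
  simp [activeTimes]

theorem coe_activeTimes (B : BroadcastNetwork V) (a b : ℕ) (x : V) :
    (B.activeTimes a b x : Set ℕ) = {s : ℕ | s ∈ Set.Icc a b ∧ B.A s x} := by
  ext s
  simp [mem_activeTimes]

theorem card_activeTimes_le_of_adj (B : BroadcastNetwork V) {a b : ℕ} (ha : 1 ≤ a)
    (hb : b ≤ B.T) {w x : V} (hadj : B.H.Adj w x) :
    #(B.activeTimes a b w) ≤ #(B.activeTimes a b x) + 1 := by
  refine Finset.card_le_card_add_one_of_separated _ _ fun s hs n hn hsn => ?_
  rw [mem_activeTimes] at hs hn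
  obtain ⟨r, hr, hrx⟩ := B.sync w s n (by omega) (by omega) hsn hs.2 hn.2 x hadj
  rw [Finset.mem_Icc] at hr
  exact ⟨r, mem_activeTimes.mpr ⟨by omega, hrx⟩, hr.1, by omega⟩

theorem card_activeTimes_path_le (B : BroadcastNetwork V) {a b : ℕ} (ha : 1 ≤ a)
    (hb : b ≤ B.T) (v : V) {ℓ : ℕ} (u : Fin ℓ → V)
    (hstart : ∀ h0 : 0 < ℓ, B.H.Adj v (u ⟨0, h0⟩))
    (hpath : ∀ (i : Fin ℓ) (hi : (i : ℕ) + 1 < ℓ), B.H.Adj (u i) (u ⟨(i : ℕ) + 1, hi⟩))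
    (i : Fin ℓ) :
    #(B.activeTimes a b (u i)) ≤ #(B.activeTimes a b v) + i + 1 := by
  obtain ⟨n, hn⟩ := i
  induction n with
  | zero => exact B.card_activeTimes_le_of_adj ha hb (hstart hn).symm
  | succ k ih =>
    have hstep := B.card_activeTimes_le_of_adj ha hb (hpath ⟨k, by omega⟩ hn).symm
    have hk := ih (by omega)
    dsimp only at hstep hk ⊢
    omega

end BroadcastNetwork

theorem broadcast_path_activation_bound_general {V : Type} (B : BroadcastNetwork V)
    (v : V) (t t' : ℕ) (ht' : t' ≤ B.T)
    (hgap : ∀ s, t < s → s < t' → ¬ B.A s v)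
    (ℓ : ℕ) (u : Fin ℓ → V)
    (hstart : ∀ h0 : 0 < ℓ, B.H.Adj v (u ⟨0, h0⟩))
    (hpath : ∀ (i : Fin ℓ) (hi : (i : ℕ) + 1 < ℓ), B.H.Adj (u i) (u ⟨(i : ℕ) + 1, hi⟩)) :
    (∀ i : Fin ℓ,
      {s : ℕ | s ∈ Set.Icc (t + 1) (t' - 1) ∧ B.A s (u i)}.ncard ≤ (i : ℕ) + 1) ∧
    (∀ u' : V, B.H.Adj v u' →
      {s : ℕ | s ∈ Set.Icc (t + 1) (t' - 1) ∧ B.A s u'}.ncard ≤ 1) := by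
  have hb : t' - 1 ≤ B.T := by omega
  have hv : B.activeTimes (t + 1) (t' - 1) v = ∅ :=
    Finset.eq_empty_of_forall_notMem fun s hs => by
      rw [BroadcastNetwork.mem_activeTimes] at hs
      exact hgap s (by omega) (by omega) hs.2
  simp only [← BroadcastNetwork.coe_activeTimes, Set.ncard_coe_finset]
  constructor
  · intro i
    simpa [hv] using B.card_activeTimes_path_le (Nat.le_add_left 1 t) hb v u hstart hpath i
  · intro u' hadj
    simpa [hv] using B.card_activeTimes_le_of_adj (Nat.le_add_left 1 t) hb hadj.symm

/-- if `v` is active at timesteps `t < t'` and inactive strictly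
between them, and `u 0, u 1, …, u (ℓ-1)` is a path in the underlying graph
with `u 0` a neighbour of `v`, then `u i` is active at most `i + 1` times in
`[t+1, t'-1]`; in particular any neighbour of `v` is active at most once
strictly between consecutive activations of `v`. -/
theorem broadcast_path_activation_bound {V : Type} (B : BroadcastNetwork V)
    (v : V) (t t' : ℕ) (ht : 1 ≤ t) (ht' : t' ≤ B.T) (htt : t < t')
    (hv : B.A t v) (hv' : B.A t' v) (hgap : ∀ s, t < s → s < t' → ¬ B.A s v)
    (ℓ : ℕ) (u : Fin ℓ → V)
    (hstart : ∀ h0 : 0 < ℓ, B.H.Adj v (u ⟨0, h0⟩))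
    (hpath : ∀ (i : Fin ℓ) (hi : (i : ℕ) + 1 < ℓ), B.H.Adj (u i) (u ⟨(i : ℕ) + 1, hi⟩)) :
    (∀ i : Fin ℓ,
      {s : ℕ | s ∈ Set.Icc (t + 1) (t' - 1) ∧ B.A s (u i)}.ncard ≤ (i : ℕ) + 1) ∧
    (∀ u' : V, B.H.Adj v u' →
      {s : ℕ | s ∈ Set.Icc (t + 1) (t' - 1) ∧ B.A s u'}.ncard ≤ 1) :=
  broadcast_path_activation_bound_general B v t t' ht' hgap ℓ u hstart hpath
end

section
/- For every f ≥ 1 and n ≥ 3 there exists an f-frequent temporal graph on n vertices and a starting vertex such that every exploring temporal walk from that vertex has length at least f(2n − 5) + 1. -/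
open Finset

theorem Nat.exists_mem_Ico_modEq (a t : ℕ) {f : ℕ} (hf : 0 < f) :
    ∃ s ∈ Ico t (t + f), s ≡ a [MOD f] := by
  have hr := Nat.mod_lt (a + (f - t % f)) hf
  refine ⟨t + (a + (f - t % f)) % f, mem_Ico.2 ⟨by omega, by omega⟩, ?_⟩
  calc t + (a + (f - t % f)) % f ≡ t + (a + (f - t % f)) [MOD f] :=
        (Nat.mod_modEq _ _).add_left t
    _ = a + f * (t / f + 1) := by
      have := Nat.mod_add_div t f
      have := Nat.mod_lt t hf
      rw [Nat.mul_succ]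
      omega
    _ ≡ a [MOD f] := Nat.add_mul_mod_self_left a f _

theorem Finset.card_le_sub_one_of_forall_modEq_one {f k : ℕ} {S : Finset ℕ}
    (hS : ∀ x ∈ S, 2 ≤ x ∧ x ≡ 1 [MOD f] ∧ x ≤ f * k) : #S ≤ k - 1 := by
  have hsub : S ⊆ (Ico 1 k).image (fun q => f * q + 1) := by
    intro x hx
    obtain ⟨h2, hmod, hle⟩ := hS x hx
    obtain ⟨q, hq⟩ := (Nat.modEq_iff_dvd' (by omega)).1 hmod.symm
    have hq1 : 1 ≤ q := Nat.pos_of_ne_zero fun h => by simp [h] at hq; omega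
    have hqk : q < k := Nat.lt_of_mul_lt_mul_left (a := f) (by omega)
    exact mem_image.2 ⟨q, mem_Ico.2 ⟨hq1, hqk⟩, by omega⟩
  calc #S ≤ #((Ico 1 k).image (fun q => f * q + 1)) := card_le_card hsub
    _ ≤ #(Ico 1 k) := card_image_le
    _ = k - 1 := Nat.card_Ico 1 k

theorem Fin.two_mul_card_filter_sub_one_le {m : ℕ} (q : Fin (m + 1) → Prop) [DecidablePred q]
    (h0 : ¬ q 0) (hq : ∀ i : Fin m, ¬ (q i.castSucc ∧ q i.succ)) :
    2 * #{j | q j} - 1 ≤ #{i : Fin m | q i.castSucc ∨ q i.succ} := by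
  have hsucc : #{j | q j} = #{i : Fin m | q i.succ} := by simp [Fin.card_filter_univ_succ, h0]
  have hcast : #{j | q j} ≤ #{i : Fin m | q i.castSucc} + 1 := by
    simp only [card_filter]
    rw [Fin.sum_univ_castSucc]
    gcongr
    split_ifs <;> simp
  rw [filter_or, card_union_of_disjoint (disjoint_filter.2 fun i _ h h' => hq i ⟨h, h'⟩)]
  omega

namespace TemporalGraph

variable {V : Type}

def star (f T : ℕ) (c a : V) : TemporalGraph V where
  T := T
  active t e := ∃ v ≠ c, e = s(c, v) ∧ (t ≡ 1 [MOD f] ∨ v = a)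

variable {f T : ℕ} {c a : V}

theorem star_freqLE {u v : V} (hf : 0 < f) (h : (star f T c a).underlying.Adj u v) :
    (star f T c a).FreqLE s(u, v) f := by
  obtain ⟨-, -, -, x, hx, he, -⟩ := h
  exact ⟨hf, fun t _ _ => (Nat.exists_mem_Ico_modEq 1 t hf).imp
    fun s hs => ⟨hs.1, x, hx, he, Or.inl hs.2⟩⟩

namespace TWalk

variable (w : (star f T c a).TWalk a)

theorem star_step_center (i : Fin w.m) : w.vs i.castSucc = c ∨ w.vs i.succ = c := by
  obtain ⟨v, -, he, -⟩ := w.steps i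
  rcases Sym2.eq_iff.1 he with ⟨h, -⟩ | ⟨-, h⟩ <;> simp [h]

variable [DecidableEq V]

theorem star_ts_modEq (i : Fin w.m)
    (h : w.vs i.castSucc ∉ ({c, a} : Finset V) ∨ w.vs i.succ ∉ ({c, a} : Finset V)) :
    w.ts i ≡ 1 [MOD f] := by
  obtain ⟨v, hv, he, ht⟩ := w.steps i
  rcases Sym2.eq_iff.1 he with ⟨h1, h2⟩ | ⟨h1, h2⟩ <;>
    simp_all [or_iff_not_imp_right]

theorem star_two_le_ts (hca : c ≠ a) (i : Fin w.m)
    (h : w.vs i.castSucc ∉ ({c, a} : Finset V) ∨ w.vs i.succ ∉ ({c, a} : Finset V)) :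
    2 ≤ w.ts i := by
  have hi0 : i.val ≠ 0 := by
    intro hi
    have hcs : i.castSucc = 0 := Fin.ext hi
    rcases w.star_step_center i with h' | h'
    · rw [hcs, w.start_eq] at h'
      exact hca h'.symm
    · simp [hcs, w.start_eq, h'] at h
  have := w.mono (show (⟨0, i.pos⟩ : Fin w.m) < i from Nat.pos_of_ne_zero hi0)
  have := w.time_ge ⟨0, i.pos⟩
  omega

theorem star_length [Fintype V] (hca : c ≠ a) (hV : 3 ≤ Fintype.card V) (hw : w.Explores) :
    f * (2 * Fintype.card V - 5) + 1 ≤ w.length := by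
  set q : Fin (w.m + 1) → Prop := fun j => w.vs j ∉ ({c, a} : Finset V)
  have hq0 : ¬ q 0 := by simp [q, w.start_eq]
  have hqq (i : Fin w.m) : ¬ (q i.castSucc ∧ q i.succ) := by
    rintro ⟨h1, h2⟩
    rcases w.star_step_center i with h | h <;> simp [q, h] at h1 h2
  have hvisits : Fintype.card V - 2 ≤ #{j | q j} :=
    calc Fintype.card V - 2 = #({c, a}ᶜ : Finset V) := by
          rw [card_compl, card_pair_eq_two_iff.2 hca]
      _ ≤ #{j | q j} := card_le_card_of_surjOn w.vs fun v hv =>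
          let ⟨j, hj⟩ := hw v; ⟨j, by subst hj; simpa [q, and_comm] using hv, hj⟩
  set S : Finset (Fin w.m) := {i | q i.castSucc ∨ q i.succ}
  have hS : 2 * Fintype.card V - 5 ≤ #S :=
    le_trans (by omega) (Fin.two_mul_card_filter_sub_one_le q hq0 hqq)
  by_contra! hlt
  have hS' := card_le_sub_one_of_forall_modEq_one (f := f) (k := 2 * Fintype.card V - 5)
    (S := S.image w.ts) <| by
      simp only [mem_image]
      rintro _ ⟨i, hi, rfl⟩
      have hi : q i.castSucc ∨ q i.succ := (mem_filter.1 hi).2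
      exact ⟨w.star_two_le_ts hca i hi, w.star_ts_modEq i hi,
        Nat.le_of_lt_succ ((le_sup (mem_univ i)).trans_lt hlt)⟩
  rw [card_image_of_injective _ w.mono.injective] at hS'
  omega

end TWalk

theorem exists_explores_star {f T n : ℕ} (hf : 0 < f) (hT : f * (2 * n + 1) + 1 ≤ T) :
    ∃ w : (star f T (0 : Fin (n + 3)) 1).TWalk 1, w.Explores := by
  let vs : Fin (2 * n + 3) → Fin (n + 3) := fun j =>
    if j.val % 2 = 0 then ⟨j / 2 + 1, by omega⟩ else 0
  have hact (i : ℕ) (v : Fin (n + 3)) (hv : v ≠ 0) : (star f T 0 1).active (f * i + 1) s(0, v) :=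
    ⟨v, hv, rfl, Or.inl (by simp [Nat.ModEq])⟩
  refine ⟨⟨2 * n + 2, vs, fun i => f * i + 1, ?_, ?_, fun _ => by omega, ?_, ?_⟩, ?_⟩
  · simp [vs]
  · intro i j hij
    have := (Nat.mul_lt_mul_left hf).2 hij
    dsimp only
    omega
  · intro i
    have := Nat.mul_le_mul_left f (show i.val ≤ 2 * n + 1 by omega)
    show f * i + 1 ≤ T
    omega
  · intro i
    rcases Nat.mod_two_eq_zero_or_one i with h | h
    · have h' : (i.val + 1) % 2 ≠ 0 := by omega
      simp only [vs, Fin.val_castSucc, Fin.val_succ, h, h', if_true, if_false]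
      rw [Sym2.eq_swap]
      exact hact i _ (Fin.ne_of_val_ne (by simp))
    · have h' : (i.val + 1) % 2 = 0 := by omega
      simp only [vs, Fin.val_castSucc, Fin.val_succ, h, h', if_true, if_false, one_ne_zero]
      exact hact i _ (Fin.ne_of_val_ne (by simp))
  · show Function.Surjective vs
    intro v
    cases v using Fin.cases with
    | zero => exact ⟨⟨1, by omega⟩, by simp [vs]⟩
    | succ u => exact ⟨⟨2 * u, by omega⟩, by ext; simp [vs]⟩

end TemporalGraph

/-- for every `f ≥ 1` and `n ≥ 3` there is an `f`-frequent
temporal graph on `n` vertices and a starting vertex such that the graph is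
explorable, but every exploring temporal walk from that vertex has length at
least `f(2n - 5) + 1`. -/
theorem frequent_lower_bound (f n : ℕ) (hf : 1 ≤ f) (hn : 3 ≤ n) :
    ∃ G : TemporalGraph (Fin n),
      (∀ u v : Fin n, G.underlying.Adj u v → G.FreqLE s(u, v) f) ∧
      ∃ start : Fin n,
        (∃ w : G.TWalk start, w.Explores) ∧
        ∀ w : G.TWalk start, w.Explores → f * (2 * n - 5) + 1 ≤ w.length := by
  obtain ⟨n, rfl⟩ : ∃ k, n = k + 3 := ⟨n - 3, by omega⟩
  refine ⟨.star f (f * (2 * n + 1) + 1) 0 1, fun u v h => TemporalGraph.star_freqLE hf h, 1,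
    TemporalGraph.exists_explores_star hf le_rfl, fun w hw => ?_⟩
  simpa using w.star_length (by simp) (by simp) hw
end
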